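/- arXiv:1011.5870 — 5 statements merged into one kernel-verified Lean document; each statement's English description precedes it below -/
import Mathlib

section
/- Let A be an m×n (0,1)-matrix and let t be a positive integer. Then ρ_t(A) = min{ te + f : there exists a set of e rows and f columns of A that together cover all the 1s of A }. -/
/-!
Replace each row by `t` copies and add `d` dummy columns adjacent to every row. If every set `R`
of rows satisfies `t·|R| ≤ |N(R)| + d`, where `N(R)` is the set of columns meeting `R` in a 1,
Hall's theorem matches all copies, and the copies matched to genuine columns form a `t`-term
selection of size at least `t·m - d`. Taking `R` to minimise `t·|Rᶜ| + |N(R)|`, the cost of the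
cover `(Rᶜ, N(R))`, and `d = t·m` minus that minimum, the minimality of `R` is exactly Hall's
condition. Conversely, the 1s of a selection lying in `E` number at most `t·|E|` and the
remaining ones at most `|F|`.
-/

open scoped BigOperators

/-- The `t`-term rank of a matrix `A` with entries in `ℕ`: the largest number of 1s of `A`
(equivalently, the largest sum `σ(B)` over `(0,1)`-matrices `B ≤ A`) with at most one 1 in
each column and at most `t` 1s in each row. -/
noncomputable def tTermRank {α β : Type*} [Fintype α] [Fintype β] (t : ℕ)
    (A : Matrix α β ℕ) : ℕ :=
  sSup {k : ℕ | ∃ B : Matrix α β ℕ,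
    (∀ i j, B i j ≤ A i j) ∧ (∀ i, ∑ j, B i j ≤ t) ∧ (∀ j, ∑ i, B i j ≤ 1) ∧
    k = ∑ i, ∑ j, B i j}

open Finset Function

theorem Finset.exists_injective_sum_of_card_le_card_biUnion_add {ι κ : Type*} [DecidableEq κ]
    (T : ι → Finset κ) (d : ℕ) (h : ∀ s : Finset ι, #s ≤ #(s.biUnion T) + d) :
    ∃ f : ι → κ ⊕ Fin d, Injective f ∧ ∀ x j, f x = .inl j → j ∈ T x := by
  have hall (s : Finset ι) :
      #s ≤ #(s.biUnion fun x => (T x).disjSum (univ : Finset (Fin d))) := by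
    rcases s.eq_empty_or_nonempty with rfl | hs
    · simp
    have : s.biUnion (fun x => (T x).disjSum (univ : Finset (Fin d))) =
        (s.biUnion T).disjSum univ := by
      ext (j | r) <;> simp [hs.exists_mem]
    simpa [this] using h s
  obtain ⟨f, hf, hfT⟩ := (all_card_le_biUnion_card_iff_exists_injective _).1 hall
  exact ⟨f, hf, fun x j hx => by simpa [hx] using hfT x⟩

theorem csSup_eq_csInf_of_forall_le {γ : Type*} [ConditionallyCompleteLattice γ] {S T : Set γ}
    (h : ∀ a ∈ S, ∀ b ∈ T, a ≤ b) {a b : γ} (ha : a ∈ S) (hb : b ∈ T)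
    (hba : b ≤ a) : sSup S = sInf T := by
  obtain rfl := le_antisymm (h a ha b hb) hba
  rw [IsGreatest.csSup_eq ⟨ha, fun a' ha' => h a' ha' a hb⟩,
    IsLeast.csInf_eq ⟨hb, fun b' hb' => h a ha b' hb'⟩]

namespace Matrix

variable {α β : Type*} [Fintype α] [Fintype β]

structure IsTTermSelection (t : ℕ) (A B : Matrix α β ℕ) : Prop where
  le : ∀ i j, B i j ≤ A i j
  row_sum_le : ∀ i, ∑ j, B i j ≤ t
  col_sum_le : ∀ j, ∑ i, B i j ≤ 1

def IsCover (A : Matrix α β ℕ) (E : Finset α) (F : Finset β) : Prop :=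
  ∀ i j, A i j = 1 → i ∈ E ∨ j ∈ F

def neighborCols (A : Matrix α β ℕ) (R : Finset α) : Finset β :=
  {j | ∃ i ∈ R, A i j = 1}

theorem IsTTermSelection.sum_le_of_isCover {t : ℕ} {A B : Matrix α β ℕ}
    (hA : ∀ i j, A i j ≤ 1) (hB : IsTTermSelection t A B) {E : Finset α} {F : Finset β}
    (hEF : IsCover A E F) :
    ∑ i, ∑ j, B i j ≤ t * #E + #F := by
  classical
  have hsplit (i j) :
      B i j ≤ (if i ∈ E then B i j else 0) + (if j ∈ F then B i j else 0) := by
    rcases Nat.eq_zero_or_pos (B i j) with h | h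
    · simp [h]
    · rcases hEF i j (le_antisymm (hA i j) (h.trans_le (hB.le i j))) with hi | hj
      · simp [hi]
      · simp [hj]
  have hE : ∑ i, ∑ j, (if i ∈ E then B i j else 0) = ∑ i ∈ E, ∑ j, B i j := by simp
  have hF : ∑ i, ∑ j, (if j ∈ F then B i j else 0) = ∑ j ∈ F, ∑ i, B i j := by
    rw [sum_comm]; simp
  calc ∑ i, ∑ j, B i j
      ≤ ∑ i, ∑ j, ((if i ∈ E then B i j else 0) + (if j ∈ F then B i j else 0)) := by
        gcongr with i _ j _; exact hsplit i j
    _ = ∑ i ∈ E, ∑ j, B i j + ∑ j ∈ F, ∑ i, B i j := by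
        simp only [sum_add_distrib, hE, hF]
    _ ≤ ∑ _i ∈ E, t + ∑ _j ∈ F, 1 := by
        gcongr with i _ j _ <;> [exact hB.row_sum_le i; exact hB.col_sum_le j]
    _ = t * #E + #F := by simp [mul_comm]

theorem exists_isTTermSelection_of_injective {γ : Type*} [Fintype γ] {A : Matrix α β ℕ}
    {t : ℕ} {f : α × Fin t → β ⊕ γ} (hf : Injective f)
    (hfA : ∀ i k j, f (i, k) = .inl j → A i j = 1) :
    ∃ B, IsTTermSelection t A B ∧
      t * Fintype.card α ≤ ∑ i, ∑ j, B i j + Fintype.card γ := by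
  classical
  have hfiber (y) : ∑ x, (if f x = y then 1 else 0) ≤ 1 := by
    rw [sum_boole]
    exact card_le_one.2 fun x hx x' hx' => hf (by simp_all)
  have hsplit (x) :
      ∑ j, (if f x = .inl j then 1 else 0) + ∑ r, (if f x = .inr r then 1 else 0) = 1 :=
    (Fintype.sum_sum_type (fun y => if f x = y then 1 else 0)).symm.trans (by simp)
  -- `B i j` counts the copies of row `i` matched to column `j`.
  set B : Matrix α β ℕ := fun i j => ∑ k, if f (i, k) = .inl j then 1 else 0
  have hcol (j) : ∑ i, B i j ≤ 1 := by
    simpa only [B, ← Fintype.sum_prod_type'] using hfiber (.inl j)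
  refine ⟨B, ⟨fun i j => ?_, fun i => ?_, hcol⟩, ?_⟩
  · by_cases hij : A i j = 1
    · exact hij ▸ (single_le_sum (fun i _ => Nat.zero_le (B i j)) (mem_univ i)).trans (hcol j)
    · have : B i j = 0 := sum_eq_zero fun k _ => if_neg fun hk => hij (hfA i k j hk)
      omega
  · calc ∑ j, B i j = ∑ k, ∑ j, (if f (i, k) = .inl j then 1 else 0) := sum_comm
      _ ≤ ∑ _k : Fin t, 1 := by
        gcongr with k; exact (le_add_right le_rfl).trans (hsplit (i, k)).le
      _ = t := by simp
  · have hB : ∑ i, ∑ j, B i j = ∑ x, ∑ j, (if f x = .inl j then 1 else 0) := by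
      rw [Fintype.sum_prod_type]
      exact sum_congr rfl fun i _ => sum_comm
    calc t * Fintype.card α = ∑ x : α × Fin t, 1 := by simp [mul_comm]
      _ = ∑ x, (∑ j, (if f x = .inl j then 1 else 0) +
            ∑ r, (if f x = .inr r then 1 else 0)) :=
        sum_congr rfl fun x _ => (hsplit x).symm
      _ = ∑ i, ∑ j, B i j + ∑ r, ∑ x, (if f x = .inr r then 1 else 0) := by
        rw [sum_add_distrib, hB, sum_comm (γ := γ)]
      _ ≤ ∑ i, ∑ j, B i j + ∑ _r : γ, 1 := by gcongr with r; exact hfiber _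
      _ = ∑ i, ∑ j, B i j + Fintype.card γ := by simp

theorem exists_isTTermSelection_of_mul_card_le_card_neighborCols_add {A : Matrix α β ℕ}
    {t d : ℕ} (h : ∀ R : Finset α, t * #R ≤ #(A.neighborCols R) + d) :
    ∃ B, IsTTermSelection t A B ∧ t * Fintype.card α ≤ ∑ i, ∑ j, B i j + d := by
  classical
  have hall (s : Finset (α × Fin t)) :
      #s ≤ #(s.biUnion fun x => A.neighborCols {x.1}) + d := by
    have hs : #s ≤ t * #(s.image Prod.fst) :=
      calc #s ≤ #(s.image Prod.fst ×ˢ (univ : Finset (Fin t))) :=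
            card_le_card fun x hx => mem_product.2 ⟨mem_image_of_mem _ hx, mem_univ _⟩
        _ = t * #(s.image Prod.fst) := by simp [mul_comm]
    have hN : A.neighborCols (s.image Prod.fst) ⊆ s.biUnion fun x => A.neighborCols {x.1} := by
      intro j
      simp only [neighborCols, mem_filter, mem_univ, true_and, mem_image, mem_biUnion,
        mem_singleton]
      rintro ⟨_, ⟨x, hx, rfl⟩, hxj⟩
      exact ⟨x, hx, x.1, rfl, hxj⟩
    exact hs.trans ((h _).trans (by gcongr))
  obtain ⟨f, hf, hfA⟩ := exists_injective_sum_of_card_le_card_biUnion_add _ d hall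
  simpa using exists_isTTermSelection_of_injective hf fun i k j hk => by
    simpa [neighborCols] using hfA (i, k) j hk

theorem exists_isTTermSelection_isCover_le (A : Matrix α β ℕ) (t : ℕ) :
    ∃ B, IsTTermSelection t A B ∧
      ∃ E F, IsCover A E F ∧ t * #E + #F ≤ ∑ i, ∑ j, B i j := by
  classical
  obtain ⟨R, -, hR⟩ := exists_min_image univ
    (fun R : Finset α => t * #Rᶜ + #(A.neighborCols R)) univ_nonempty
  have hRα : t * #Rᶜ + #(A.neighborCols R) ≤ t * Fintype.card α := by
    simpa [neighborCols] using hR ∅ (mem_univ _)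
  obtain ⟨B, hB, hBsum⟩ := exists_isTTermSelection_of_mul_card_le_card_neighborCols_add
      (A := A) (t := t) (d := t * Fintype.card α - (t * #Rᶜ + #(A.neighborCols R))) fun R' => by
    have hR' := hR R' (mem_univ _)
    have hα : t * #R'ᶜ + t * #R' = t * Fintype.card α := by
      rw [← mul_add, card_compl_add_card]
    omega
  refine ⟨B, hB, Rᶜ, A.neighborCols R, fun i j hij => ?_, by omega⟩
  by_cases hi : i ∈ R
  · exact .inr (by simpa [neighborCols] using ⟨i, hi, hij⟩)
  · exact .inl (mem_compl.2 hi)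

end Matrix

theorem t_term_rank_eq_min_cover_general (m n t : ℕ)
    (A : Matrix (Fin m) (Fin n) ℕ) (hA : ∀ i j, A i j ≤ 1) :
    tTermRank t A = sInf {v : ℕ | ∃ (E : Finset (Fin m)) (F : Finset (Fin n)),
      (∀ i j, A i j = 1 → i ∈ E ∨ j ∈ F) ∧ v = t * E.card + F.card} := by
  obtain ⟨B, hB, E, F, hEF, hBsum⟩ := A.exists_isTTermSelection_isCover_le t
  refine csSup_eq_csInf_of_forall_le ?_
    ⟨B, hB.le, hB.row_sum_le, hB.col_sum_le, rfl⟩ ⟨E, F, hEF, rfl⟩ hBsum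
  rintro _ ⟨B', hle, hrow, hcol, rfl⟩ _ ⟨E', F', hE'F', rfl⟩
  exact Matrix.IsTTermSelection.sum_le_of_isCover hA ⟨hle, hrow, hcol⟩ hE'F'

/-- König–Egerváry type theorem for the `t`-term rank: `ρ_t(A)` equals the minimum of
`t·e + f` over all covers of the 1s of `A` by `e` rows and `f` columns. -/
theorem t_term_rank_eq_min_cover (m n t : ℕ) (ht : 0 < t)
    (A : Matrix (Fin m) (Fin n) ℕ) (hA : ∀ i j, A i j ≤ 1) :
    tTermRank t A = sInf {v : ℕ | ∃ (E : Finset (Fin m)) (F : Finset (Fin n)),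
      (∀ i j, A i j = 1 → i ∈ E ∨ j ∈ F) ∧ v = t * E.card + F.card} :=
  t_term_rank_eq_min_cover_general m n t A hA
end

section
/- Let A be an m×n (0,1)-matrix, regarded as the incidence matrix of a family C = (C_1, C_2, …, C_m) of subsets of an n-element set X = {x_1, …, x_n} (so x_j ∈ C_i if and only if the (i,j)-entry of A is 1), and let t be a positive integer. Then ρ_t(A) = min over all subsets K of {1,2,…,m} of ( |∪_{i∈K} C_i| + t(m − |K|) ). -/
/-!
The bound `ρ_t(A) ≤ |⋃_{i∈K} C_i| + t(m − |K|)` holds because the rows in `K` can only use the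
columns of `⋃_{i∈K} C_i`, each at most once, and every other row contributes at most `t`.
For the converse, let `μ` be the minimum and replace each row `i` by `t` copies, all adjacent to
`C_i`. After adding `tm − μ` dummy columns adjacent to every copy, Hall's condition holds, and a
matching of all copies, with its dummy edges discarded, is a pattern of at least `μ` ones with
at most `t` per row and one per column.
-/

open scoped BigOperators

open Finset Function

theorem exists_injective_disjSum_of_card_le_card_biUnion_add {ι β D : Type*}
    [DecidableEq β] [DecidableEq D] [Fintype D] (N : ι → Finset β)
    (h : ∀ s : Finset ι, #s ≤ #(s.biUnion N) + Fintype.card D) :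
    ∃ f : ι → β ⊕ D, Injective f ∧ ∀ i, f i ∈ (N i).disjSum univ := by
  refine (all_card_le_biUnion_card_iff_exists_injective _).1 fun s => ?_
  rcases s.eq_empty_or_nonempty with rfl | ⟨i, hi⟩
  · simp
  have : s.biUnion (fun i => (N i).disjSum (univ : Finset D)) = (s.biUnion N).disjSum univ := by
    ext (b | e) <;> simp only [mem_biUnion, inl_mem_disjSum, inr_mem_disjSum, mem_univ, and_true]
    exact ⟨fun _ => trivial, fun _ => ⟨i, hi⟩⟩
  rw [this, card_disjSum, card_univ]
  exact h s

theorem Function.Injective.sum_ite_eq_le_one {γ δ : Type*} [Fintype γ] [DecidableEq δ]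
    {f : γ → δ} (hf : Injective f) (y : δ) : ∑ c, (if f c = y then 1 else 0) ≤ 1 := by
  rw [sum_boole, Nat.cast_id]
  exact card_le_one.2 fun a ha b hb => hf <| ((mem_filter.1 ha).2).trans (mem_filter.1 hb).2.symm

theorem Sum.sum_ite_eq_inl_add_sum_ite_eq_inr {β D : Type*} [Fintype β] [Fintype D]
    [DecidableEq β] [DecidableEq D] (x : β ⊕ D) :
    (∑ j, if x = .inl j then 1 else 0) + (∑ e, if x = .inr e then 1 else 0) = 1 := by
  cases x <;> simp

theorem card_le_card_biUnion_fst_add {α β : Type*} [DecidableEq α] [DecidableEq β]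
    {C : α → Finset β} {t d : ℕ} (h : ∀ K : Finset α, t * #K ≤ #(K.biUnion C) + d)
    (s : Finset (α × Fin t)) :
    #s ≤ #(s.biUnion fun p => C p.1) + d :=
  calc #s ≤ #(s.image Prod.fst ×ˢ (univ : Finset (Fin t))) :=
        card_le_card fun p hp => mem_product.2 ⟨mem_image_of_mem _ hp, mem_univ _⟩
    _ = t * #(s.image Prod.fst) := by rw [card_product, card_univ, Fintype.card_fin, mul_comm]
    _ ≤ #((s.image Prod.fst).biUnion C) + d := h _
    _ = #(s.biUnion fun p => C p.1) + d := by rw [image_biUnion]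

section tTermRank

variable {α β : Type*} [Fintype α] [Fintype β] {t : ℕ} {A : Matrix α β ℕ}

theorem le_tTermRank (B : Matrix α β ℕ) (hBA : ∀ i j, B i j ≤ A i j)
    (hrow : ∀ i, ∑ j, B i j ≤ t) (hcol : ∀ j, ∑ i, B i j ≤ 1) :
    ∑ i, ∑ j, B i j ≤ tTermRank t A := by
  refine le_csSup ⟨Fintype.card α * t, ?_⟩ ⟨B, hBA, hrow, hcol, rfl⟩
  rintro _ ⟨B', -, hrow', -, rfl⟩
  exact (sum_le_sum fun i _ => hrow' i).trans_eq (by simp)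

theorem tTermRank_le {v : ℕ}
    (h : ∀ B : Matrix α β ℕ, (∀ i j, B i j ≤ A i j) → (∀ i, ∑ j, B i j ≤ t) →
      (∀ j, ∑ i, B i j ≤ 1) → ∑ i, ∑ j, B i j ≤ v) :
    tTermRank t A ≤ v := by
  refine csSup_le ⟨0, 0, fun _ _ => Nat.zero_le _, by simp, by simp, by simp⟩ ?_
  rintro _ ⟨B, hBA, hrow, hcol, rfl⟩
  exact h B hBA hrow hcol

variable [DecidableEq β] {C : α → Finset β}

theorem tTermRank_le_card_biUnion_add [DecidableEq α] (hA : ∀ i j, j ∉ C i → A i j = 0)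
    (K : Finset α) :
    tTermRank t A ≤ #(K.biUnion C) + t * #Kᶜ := by
  refine tTermRank_le fun B hBA hrow hcol => ?_
  have hK : ∑ i ∈ K, ∑ j, B i j ≤ #(K.biUnion C) := by
    calc ∑ i ∈ K, ∑ j, B i j
        = ∑ j, ∑ i ∈ K, B i j := sum_comm
      _ = ∑ j ∈ K.biUnion C, ∑ i ∈ K, B i j := by
          refine (sum_subset (subset_univ _) fun j _ hj => ?_).symm
          refine sum_eq_zero fun i hi => Nat.le_zero.1 ?_
          exact hA i j (fun hji => hj (mem_biUnion.2 ⟨i, hi, hji⟩)) ▸ hBA i j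
      _ ≤ ∑ _j ∈ K.biUnion C, 1 :=
          sum_le_sum fun j _ => (sum_le_sum_of_subset (subset_univ K)).trans (hcol j)
      _ = #(K.biUnion C) := by simp
  have hKc : ∑ i ∈ Kᶜ, ∑ j, B i j ≤ t * #Kᶜ := by
    simpa [mul_comm] using sum_le_sum fun i (_ : i ∈ Kᶜ) => hrow i
  rw [← sum_add_sum_compl K]
  exact add_le_add hK hKc

theorem card_mul_le_tTermRank_add_of_injective {D : Type*} [Fintype D] [DecidableEq D]
    (hA : ∀ i j, j ∈ C i → 1 ≤ A i j) (f : α × Fin t → β ⊕ D) (hf : Injective f)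
    (hfC : ∀ p, f p ∈ (C p.1).disjSum univ) :
    Fintype.card α * t ≤ tTermRank t A + Fintype.card D := by
  set B : Matrix α β ℕ := fun i j => ∑ k, if f (i, k) = .inl j then 1 else 0
  have hcol : ∀ j, ∑ i, B i j ≤ 1 := fun j => by
    simpa only [B, Fintype.sum_prod_type] using hf.sum_ite_eq_le_one (.inl j)
  have hrow : ∀ i, ∑ j, B i j ≤ t := fun i =>
    calc ∑ j, B i j = ∑ k, ∑ j, if f (i, k) = .inl j then 1 else 0 := sum_comm
      _ ≤ ∑ _k : Fin t, 1 := sum_le_sum fun k _ =>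
          (Nat.le_add_right _ _).trans_eq (Sum.sum_ite_eq_inl_add_sum_ite_eq_inr (f (i, k)))
      _ = t := by simp
  have hBA : ∀ i j, B i j ≤ A i j := fun i j => by
    by_cases hj : j ∈ C i
    · exact ((single_le_sum (fun _ _ => Nat.zero_le _) (mem_univ i)).trans (hcol j)).trans
        (hA i j hj)
    · refine (Nat.le_zero.2 (sum_eq_zero fun k _ => if_neg fun hk => hj ?_)).trans
        (Nat.zero_le _)
      exact inl_mem_disjSum.1 (hk ▸ hfC (i, k))
  have hdummy : ∑ e : D, ∑ p, (if f p = .inr e then 1 else 0) ≤ Fintype.card D :=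
    (sum_le_sum fun e _ => hf.sum_ite_eq_le_one (.inr e)).trans_eq (by simp)
  calc Fintype.card α * t
      = ∑ p : α × Fin t, ((∑ j, if f p = .inl j then 1 else 0) +
          ∑ e, if f p = .inr e then 1 else 0) := by
        simp only [Sum.sum_ite_eq_inl_add_sum_ite_eq_inr, sum_const, card_univ,
          Fintype.card_prod, Fintype.card_fin, smul_eq_mul, mul_one]
    _ = ∑ i, ∑ j, B i j + ∑ e : D, ∑ p, (if f p = .inr e then 1 else 0) := by
        rw [sum_add_distrib, sum_comm (s := univ) (t := (univ : Finset D)),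
          Fintype.sum_prod_type]
        simp only [B, sum_comm (γ := Fin t)]
    _ ≤ tTermRank t A + Fintype.card D := add_le_add (le_tTermRank B hBA hrow hcol) hdummy

theorem card_mul_le_tTermRank_add [DecidableEq α] (hA : ∀ i j, j ∈ C i → 1 ≤ A i j) {d : ℕ}
    (h : ∀ K : Finset α, t * #K ≤ #(K.biUnion C) + d) :
    Fintype.card α * t ≤ tTermRank t A + d := by
  obtain ⟨f, hf, hfC⟩ := exists_injective_disjSum_of_card_le_card_biUnion_add
    (D := Fin d) (fun p : α × Fin t => C p.1) (by simpa using card_le_card_biUnion_fst_add h)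
  simpa using card_mul_le_tTermRank_add_of_injective hA f hf hfC

end tTermRank

theorem t_term_rank_eq_min_union_general (m n t : ℕ)
    (C : Fin m → Finset (Fin n)) (A : Matrix (Fin m) (Fin n) ℕ)
    (hA : ∀ i j, A i j = if j ∈ C i then 1 else 0) :
    tTermRank t A =
      sInf {v : ℕ | ∃ K : Finset (Fin m), v = (K.biUnion C).card + t * (m - K.card)} := by
  set V := {v : ℕ | ∃ K : Finset (Fin m), v = (K.biUnion C).card + t * (m - K.card)}
  have hμ : ∀ K : Finset (Fin m), sInf V ≤ #(K.biUnion C) + t * (m - #K) :=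
    fun K => Nat.sInf_le ⟨K, rfl⟩
  obtain ⟨K₀, hK₀⟩ : sInf V ∈ V := Nat.sInf_mem ⟨_, ∅, rfl⟩
  refine le_antisymm ?_ ?_
  · simpa [hK₀, card_compl] using
      tTermRank_le_card_biUnion_add (t := t) (A := A) (fun i j hj => by simp [hA, hj]) K₀
  · have hmul : ∀ K : Finset (Fin m), t * (m - #K) + t * #K = t * m := fun K => by
      rw [← mul_add, Nat.sub_add_cancel (by simpa using card_le_univ K)]
    have hrank := card_mul_le_tTermRank_add (t := t) (C := C) (A := A) (d := t * m - sInf V)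
      (fun i j hj => by simp [hA, hj]) fun K => by have := hμ K; have := hmul K; omega
    have := hμ ∅
    simp only [Fintype.card_fin, card_empty, Nat.sub_zero, biUnion_empty] at hrank this
    rw [mul_comm] at hrank
    omega

/-- Hall-type formula for the `t`-term rank of the incidence matrix `A` of a family
`C = (C_1, …, C_m)` of subsets of an `n`-element set:
`ρ_t(A) = min over K ⊆ {1,…,m} of (|∪_{i∈K} C_i| + t(m − |K|))`. -/
theorem t_term_rank_eq_min_union (m n t : ℕ) (ht : 0 < t)
    (C : Fin m → Finset (Fin n)) (A : Matrix (Fin m) (Fin n) ℕ)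
    (hA : ∀ i j, A i j = if j ∈ C i then 1 else 0) :
    tTermRank t A =
      sInf {v : ℕ | ∃ K : Finset (Fin m), v = (K.biUnion C).card + t * (m - K.card)} :=
  t_term_rank_eq_min_union_general m n t C A hA
end

section
/- Let A be an m×n (0,1)-matrix and let t ≥ 2 be an integer. Then there exist (0,1)-matrices C ≤ B ≤ A (entrywise) such that: every row sum of B is at most t and every column sum of B is at most 1 with σ(B) = ρ_t(A); and every row sum of C is at most t−1 and every column sum of C is at most 1 with σ(C) = ρ_{t−1}(A). -/
/-!
Encode a matrix with column sums at most `1` by the partial map sending each column to the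
row of its `1`. Admissible placements (entries below `A`, row sums at most `t`) have an
augmentation property: if `f` has fewer `1`s than `g`, then `f` can be enlarged by one entry while
changing a single row sum. Take a column `j₀` used by `g` (in row `i₀`) but not by `f`; if row `i₀`
of `f` is not full, put a `1` at `(i₀, j₀)`; otherwise move one `1` of row `i₀` of `f` that `g`
does not share to column `j₀`, which brings `f` closer to `g`, and repeat.

Starting from a realizer of `ρ_{t-1}(A)` and augmenting `ρ_t(A) - ρ_{t-1}(A)` times gives a
realizer `B` of `ρ_t(A)` with at most `ρ_t(A) - ρ_{t-1}(A)` rows of sum exactly `t`. Deleting one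
`1` from each of these rows leaves `C ≤ B` with row sums at most `t - 1` and
`σ(C) ≥ ρ_{t-1}(A)`, hence `σ(C) = ρ_{t-1}(A)`.
-/

open scoped BigOperators

namespace TermRank

open Finset

variable {α β : Type*}

section Admissible

variable [Fintype α] [Fintype β]

def Admissible (t : ℕ) (A B : Matrix α β ℕ) : Prop :=
  (∀ i j, B i j ≤ A i j) ∧ (∀ i, ∑ j, B i j ≤ t) ∧ ∀ j, ∑ i, B i j ≤ 1

lemma Admissible.mono {s t : ℕ} {A B : Matrix α β ℕ} (h : Admissible s A B) (hst : s ≤ t) :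
    Admissible t A B :=
  ⟨h.1, fun i => (h.2.1 i).trans hst, h.2.2⟩

lemma bddAbove_admissible_sums (t : ℕ) (A : Matrix α β ℕ) :
    BddAbove {k : ℕ | ∃ B : Matrix α β ℕ,
      (∀ i j, B i j ≤ A i j) ∧ (∀ i, ∑ j, B i j ≤ t) ∧ (∀ j, ∑ i, B i j ≤ 1) ∧
      k = ∑ i, ∑ j, B i j} := by
  refine ⟨Fintype.card β, ?_⟩
  rintro _ ⟨B, -, -, hcol, rfl⟩
  calc ∑ i, ∑ j, B i j = ∑ j, ∑ i, B i j := sum_comm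
    _ ≤ ∑ _ : β, 1 := sum_le_sum fun j _ => hcol j
    _ = Fintype.card β := by simp

lemma Admissible.sum_le_tTermRank {t : ℕ} {A B : Matrix α β ℕ} (h : Admissible t A B) :
    ∑ i, ∑ j, B i j ≤ tTermRank t A :=
  le_csSup (bddAbove_admissible_sums t A) ⟨B, h.1, h.2.1, h.2.2, rfl⟩

lemma exists_admissible_sum_eq_tTermRank (t : ℕ) (A : Matrix α β ℕ) :
    ∃ B, Admissible t A B ∧ ∑ i, ∑ j, B i j = tTermRank t A := by
  obtain ⟨B, hBA, hrow, hcol, hB⟩ :=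
    Nat.sSup_mem (by exact ⟨0, 0, by simp⟩) (bddAbove_admissible_sums t A)
  exact ⟨B, ⟨hBA, hrow, hcol⟩, hB.symm⟩

lemma tTermRank_mono {s t : ℕ} (hst : s ≤ t) (A : Matrix α β ℕ) :
    tTermRank s A ≤ tTermRank t A := by
  obtain ⟨B, hB, hsum⟩ := exists_admissible_sum_eq_tTermRank s A
  exact hsum ▸ (hB.mono hst).sum_le_tTermRank

end Admissible

section GraphMatrix

variable [DecidableEq α]

def graphMatrix (f : β → Option α) : Matrix α β ℕ := fun i j => if f j = some i then 1 else 0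

lemma graphMatrix_update [DecidableEq β] (f : β → Option α) (j₀ : β) (x : Option α) (i : α) :
    graphMatrix (Function.update f j₀ x) i =
      Function.update (graphMatrix f i) j₀ (if x = some i then 1 else 0) := by
  funext j
  by_cases hj : j = j₀
  · subst hj; simp [graphMatrix]
  · simp [graphMatrix, hj]

lemma sum_graphMatrix_update [Fintype β] [DecidableEq β] (f : β → Option α) (j₀ : β)
    (x : Option α) (i : α) :
    ∑ j, graphMatrix (Function.update f j₀ x) i j + graphMatrix f i j₀ =
      ∑ j, graphMatrix f i j + if x = some i then 1 else 0 := by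
  rw [graphMatrix_update, sum_update_of_mem (mem_univ _),
    ← add_sum_erase univ _ (mem_univ j₀), sdiff_singleton_eq_erase]
  ring

lemma sum_graphMatrix_col [Fintype α] (f : β → Option α) (j : β) :
    ∑ i, graphMatrix f i j = if f j = none then 0 else 1 := by
  cases h : f j <;> simp [graphMatrix, h]

lemma sum_graphMatrix_col_le_one [Fintype α] (f : β → Option α) (j : β) :
    ∑ i, graphMatrix f i j ≤ 1 := by
  rw [sum_graphMatrix_col]; split <;> omega

lemma exists_eq_indicator_of_sum_le_one [Fintype α] (v : α → ℕ) (hv : ∑ i, v i ≤ 1) :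
    ∃ o : Option α, ∀ i, v i = if o = some i then 1 else 0 := by
  by_cases hzero : ∀ i, v i = 0
  · exact ⟨none, by simpa using hzero⟩
  push Not at hzero
  obtain ⟨i₀, hi₀⟩ := hzero
  have hsplit := add_sum_erase univ v (mem_univ i₀)
  have hrest : ∑ i ∈ univ.erase i₀, v i = 0 := by omega
  refine ⟨some i₀, fun i => ?_⟩
  by_cases hi : i = i₀
  · subst hi; simp only [if_true]; omega
  · rw [if_neg (by simpa [eq_comm] using hi)]
    exact (sum_eq_zero_iff.1 hrest) i (mem_erase.2 ⟨hi, mem_univ i⟩)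

lemma exists_graphMatrix_eq [Fintype α] {B : Matrix α β ℕ} (hB : ∀ j, ∑ i, B i j ≤ 1) :
    ∃ f : β → Option α, graphMatrix f = B := by
  choose f hf using fun j => exists_eq_indicator_of_sum_le_one (B · j) (hB j)
  exact ⟨f, funext₂ fun i j => (hf j i).symm⟩

lemma sum_graphMatrix_update_of_eq_none [Fintype β] [DecidableEq β] {f : β → Option α} {j₀ : β}
    (hf : f j₀ = none) (x : Option α) (i : α) :
    ∑ j, graphMatrix (Function.update f j₀ x) i j =
      ∑ j, graphMatrix f i j + if x = some i then 1 else 0 := by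
  simpa [graphMatrix, hf] using sum_graphMatrix_update f j₀ x i

lemma graphMatrix_update_le [DecidableEq β] {A : Matrix α β ℕ} {f : β → Option α}
    (hf : ∀ i j, graphMatrix f i j ≤ A i j) {j₀ : β} {x : Option α}
    (hx : ∀ i, (if x = some i then 1 else 0) ≤ A i j₀) (i : α) (j : β) :
    graphMatrix (Function.update f j₀ x) i j ≤ A i j := by
  rw [graphMatrix_update, Function.update_apply]
  split
  · subst j; exact hx i
  · exact hf i j

lemma sum_graphMatrix_eq_sum_col [Fintype α] [Fintype β] (f : β → Option α) :
    ∑ i, ∑ j, graphMatrix f i j = ∑ j, if f j = none then 0 else 1 :=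
  sum_comm.trans (sum_congr rfl fun j _ => sum_graphMatrix_col f j)

lemma exists_none_some_of_sum_lt [Fintype α] [Fintype β] {f g : β → Option α}
    (h : ∑ i, ∑ j, graphMatrix f i j < ∑ i, ∑ j, graphMatrix g i j) :
    ∃ j i, f j = none ∧ g j = some i := by
  by_contra! hcon
  refine h.not_ge ?_
  rw [sum_graphMatrix_eq_sum_col, sum_graphMatrix_eq_sum_col]
  refine sum_le_sum fun j _ => ?_
  cases hg : g j with
  | none => simp
  | some i => rw [if_neg fun hf => hcon j i hf hg]; simp

lemma exists_graphMatrix_le_drop_one_per_row [Fintype β] (f : β → Option α) (R : Finset α)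
    (hR : ∀ i ∈ R, 0 < ∑ j, graphMatrix f i j) :
    ∃ g : β → Option α, (∀ i j, graphMatrix g i j ≤ graphMatrix f i j) ∧
      ∀ i, ∑ j, graphMatrix g i j + (if i ∈ R then 1 else 0) = ∑ j, graphMatrix f i j := by
  classical
  induction R using Finset.induction_on with
  | empty => exact ⟨f, fun _ _ => le_rfl, by simp⟩
  | insert a R haR ih =>
    obtain ⟨g, hgf, hg⟩ := ih fun i hi => hR i (mem_insert_of_mem hi)
    have hpos : ∑ j, graphMatrix g a j ≠ 0 := by
      have h₁ := hg a
      have h₂ := hR a (mem_insert_self a R)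
      rw [if_neg haR, add_zero] at h₁
      omega
    obtain ⟨j, -, hj⟩ := exists_ne_zero_of_sum_ne_zero hpos
    have hgj : g j = some a := by_contra fun h => hj (if_neg h)
    refine ⟨Function.update g j none, graphMatrix_update_le hgf (by simp), fun i => ?_⟩
    have h := sum_graphMatrix_update g j none i
    rw [show graphMatrix g i j = if i = a then 1 else 0 by simp [graphMatrix, hgj, eq_comm]] at h
    rw [← hg i]
    by_cases hia : i = a
    · subst hia; simp [haR] at h ⊢; omega
    · simp [hia] at h ⊢; omega

end GraphMatrix

variable [Fintype α] [Fintype β] [DecidableEq α]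

lemma exists_admissible_graphMatrix_sum_eq_tTermRank (t : ℕ) (A : Matrix α β ℕ) :
    ∃ f : β → Option α, Admissible t A (graphMatrix f) ∧
      ∑ i, ∑ j, graphMatrix f i j = tTermRank t A := by
  obtain ⟨B, hB, hsum⟩ := exists_admissible_sum_eq_tTermRank t A
  obtain ⟨f, rfl⟩ := exists_graphMatrix_eq hB.2.2
  exact ⟨f, hB, hsum⟩

lemma exists_admissible_same_row_sums_closer {t : ℕ} {A : Matrix α β ℕ} {f g : β → Option α}
    (hf : Admissible t A (graphMatrix f)) (hg : Admissible t A (graphMatrix g))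
    {j₀ : β} {i₀ : α} (hfj₀ : f j₀ = none) (hgj₀ : g j₀ = some i₀)
    (hfull : t ≤ ∑ j, graphMatrix f i₀ j) :
    ∃ f₁, Admissible t A (graphMatrix f₁) ∧
      (∀ i, ∑ j, graphMatrix f₁ i j = ∑ j, graphMatrix f i j) ∧
      #{j | f₁ j ≠ g j} < #{j | f j ≠ g j} := by
  classical
  obtain ⟨j₁, hfj₁, hgj₁⟩ : ∃ j₁, f j₁ = some i₀ ∧ g j₁ ≠ some i₀ := by
    by_contra! hcon
    have : ∑ j, graphMatrix f i₀ j < ∑ j, graphMatrix g i₀ j :=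
      sum_lt_sum (fun j _ => by unfold graphMatrix; split_ifs <;> simp_all)
        ⟨j₀, mem_univ _, by simp [graphMatrix, hfj₀, hgj₀]⟩
    exact absurd (hg.2.1 i₀) (by omega)
  have hj₀₁ : j₀ ≠ j₁ := fun h => by simp [h, hfj₁] at hfj₀
  have hrow : ∀ i, ∑ j, graphMatrix (Function.update (Function.update f j₁ none) j₀ (g j₀)) i j
      = ∑ j, graphMatrix f i j := by
    intro i
    have h₁ := sum_graphMatrix_update_of_eq_none (f := Function.update f j₁ none) (j₀ := j₀)
      (by simp [hj₀₁, hfj₀]) (g j₀) i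
    have h₂ := sum_graphMatrix_update f j₁ none i
    simp only [graphMatrix, hfj₁, hgj₀, Option.some_inj] at h₁ h₂ ⊢
    rw [h₁, h₂]
    simp
  refine ⟨_, ⟨graphMatrix_update_le (graphMatrix_update_le hf.1 (by simp)) (fun i => hg.1 i j₀),
    fun i => hrow i ▸ hf.2.1 i, sum_graphMatrix_col_le_one _⟩, hrow, card_lt_card ?_⟩
  refine (ssubset_iff_of_subset fun j hj => ?_).2 ⟨j₀, ?_, ?_⟩
  · simp only [mem_filter, mem_univ, true_and, Function.update_apply] at hj ⊢
    split_ifs at hj with h₀ h₁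
    · exact absurd (h₀ ▸ rfl) hj
    · exact h₁ ▸ hfj₁ ▸ hgj₁.symm
    · exact hj
  · simp [hfj₀, hgj₀]
  · simp

lemma exists_admissible_augment_one_row {t : ℕ} {A : Matrix α β ℕ} {g : β → Option α}
    (hg : Admissible t A (graphMatrix g)) (f : β → Option α) (hf : Admissible t A (graphMatrix f))
    (hlt : ∑ i, ∑ j, graphMatrix f i j < ∑ i, ∑ j, graphMatrix g i j) :
    ∃ f' i₀, Admissible t A (graphMatrix f') ∧
      ∀ i, ∑ j, graphMatrix f' i j = ∑ j, graphMatrix f i j + if i = i₀ then 1 else 0 := by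
  classical
  induction hd : #{j | f j ≠ g j} using Nat.strong_induction_on generalizing f with
  | _ d ih =>
    obtain ⟨j₀, i₀, hfj₀, hgj₀⟩ := exists_none_some_of_sum_lt hlt
    by_cases hfull : t ≤ ∑ j, graphMatrix f i₀ j
    · obtain ⟨f₁, hf₁, hrow, hlt₁⟩ :=
        exists_admissible_same_row_sums_closer hf hg hfj₀ hgj₀ hfull
      obtain ⟨f', i₁, hf', hrow'⟩ :=
        ih _ (hd ▸ hlt₁) f₁ hf₁ (by simpa only [hrow] using hlt) rfl
      exact ⟨f', i₁, hf', fun i => (hrow' i).trans (by rw [hrow])⟩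
    · have hrow : ∀ i, ∑ j, graphMatrix (Function.update f j₀ (g j₀)) i j
          = ∑ j, graphMatrix f i j + if i = i₀ then 1 else 0 := fun i => by
        simpa [hgj₀, eq_comm] using sum_graphMatrix_update_of_eq_none hfj₀ (g j₀) i
      refine ⟨_, i₀, ⟨graphMatrix_update_le hf.1 (fun i => hg.1 i j₀), fun i => ?_,
        sum_graphMatrix_col_le_one _⟩, hrow⟩
      rw [hrow]
      split_ifs with hi
      · subst hi; omega
      · simpa using hf.2.1 i

lemma exists_admissible_card_full_rows_le (s : ℕ) (A : Matrix α β ℕ) (k : ℕ)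
    (hk : tTermRank s A + k ≤ tTermRank (s + 1) A) :
    ∃ f : β → Option α, Admissible (s + 1) A (graphMatrix f) ∧
      ∑ i, ∑ j, graphMatrix f i j = tTermRank s A + k ∧
      #{i | ∑ j, graphMatrix f i j = s + 1} ≤ k := by
  induction k with
  | zero =>
    obtain ⟨f, hf, hsum⟩ := exists_admissible_graphMatrix_sum_eq_tTermRank s A
    refine ⟨f, hf.mono s.le_succ, hsum, ?_⟩
    simp only [nonpos_iff_eq_zero, card_eq_zero, filter_eq_empty_iff]
    exact fun i _ => (hf.2.1 i).trans_lt s.lt_succ_self |>.ne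
  | succ k ih =>
    obtain ⟨f, hf, hsum, hfull⟩ := ih (by omega)
    obtain ⟨g, hg, hgsum⟩ := exists_admissible_graphMatrix_sum_eq_tTermRank (s + 1) A
    obtain ⟨f', i₀, hf', hrow⟩ := exists_admissible_augment_one_row hg f hf (by omega)
    refine ⟨f', hf', by simp [hrow, sum_add_distrib, hsum]; omega, ?_⟩
    calc #{i | ∑ j, graphMatrix f' i j = s + 1}
        ≤ #(insert i₀ ({i | ∑ j, graphMatrix f i j = s + 1} : Finset α)) := by
          refine card_le_card fun i hi => ?_
          simp only [mem_filter, mem_univ, true_and, mem_insert, hrow] at hi ⊢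
          split_ifs at hi with h
          · exact Or.inl h
          · exact Or.inr hi
      _ ≤ k + 1 := (card_insert_le _ _).trans (by omega)

theorem exists_nested_admissible_succ (s : ℕ) (A : Matrix α β ℕ) :
    ∃ B C : Matrix α β ℕ, (∀ i j, C i j ≤ B i j) ∧
      Admissible (s + 1) A B ∧ ∑ i, ∑ j, B i j = tTermRank (s + 1) A ∧
      Admissible s A C ∧ ∑ i, ∑ j, C i j = tTermRank s A := by
  have hmono := tTermRank_mono (Nat.le_add_right s 1) A
  obtain ⟨f, hf, hsum, hfull⟩ :=
    exists_admissible_card_full_rows_le s A (tTermRank (s + 1) A - tTermRank s A) (by omega)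
  obtain ⟨g, hgf, hg⟩ := exists_graphMatrix_le_drop_one_per_row f
    {i | ∑ j, graphMatrix f i j = s + 1} (fun i hi => by rw [mem_filter] at hi; omega)
  have hgA : Admissible s A (graphMatrix g) := by
    refine ⟨fun i j => (hgf i j).trans (hf.1 i j), fun i => ?_, sum_graphMatrix_col_le_one g⟩
    have := hf.2.1 i
    have := hg i
    split_ifs at this with hi <;> simp only [mem_filter, mem_univ, true_and] at hi <;> omega
  have hgsum : ∑ i, ∑ j, graphMatrix g i j + #{i | ∑ j, graphMatrix f i j = s + 1} =
      ∑ i, ∑ j, graphMatrix f i j := by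
    rw [← sum_congr rfl fun i _ => hg i, sum_add_distrib, sum_ite_mem, univ_inter, sum_const,
      smul_eq_mul, mul_one]
  have := hgA.sum_le_tTermRank
  exact ⟨_, _, hgf, hf, hsum.trans (by omega), hgA, by omega⟩

end TermRank

theorem exists_nested_realizers_general (m n t : ℕ)
    (A : Matrix (Fin m) (Fin n) ℕ) :
    ∃ B C : Matrix (Fin m) (Fin n) ℕ,
      (∀ i j, C i j ≤ B i j) ∧ (∀ i j, B i j ≤ A i j) ∧
      (∀ i, ∑ j, B i j ≤ t) ∧ (∀ j, ∑ i, B i j ≤ 1) ∧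
      (∑ i, ∑ j, B i j) = tTermRank t A ∧
      (∀ i, ∑ j, C i j ≤ t - 1) ∧ (∀ j, ∑ i, C i j ≤ 1) ∧
      (∑ i, ∑ j, C i j) = tTermRank (t - 1) A := by
  cases t with
  | zero =>
    obtain ⟨B, ⟨hBA, hrow, hcol⟩, hsum⟩ := TermRank.exists_admissible_sum_eq_tTermRank 0 A
    exact ⟨B, B, fun _ _ => le_rfl, hBA, hrow, hcol, hsum, hrow, hcol, hsum⟩
  | succ s =>
    obtain ⟨B, C, hCB, ⟨hBA, hBrow, hBcol⟩, hBsum, ⟨-, hCrow, hCcol⟩, hCsum⟩ :=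
      TermRank.exists_nested_admissible_succ s A
    exact ⟨B, C, hCB, hBA, hBrow, hBcol, hBsum, hCrow, hCcol, hCsum⟩

/-- For `t ≥ 2`, there are (0,1)-matrices `C ≤ B ≤ A` with `B` realizing `ρ_t(A)`
(row sums at most `t`, column sums at most 1) and `C` realizing `ρ_{t-1}(A)`
(row sums at most `t-1`, column sums at most 1). -/
theorem exists_nested_realizers (m n t : ℕ) (ht : 2 ≤ t)
    (A : Matrix (Fin m) (Fin n) ℕ) (hA : ∀ i j, A i j ≤ 1) :
    ∃ B C : Matrix (Fin m) (Fin n) ℕ,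
      (∀ i j, C i j ≤ B i j) ∧ (∀ i j, B i j ≤ A i j) ∧
      (∀ i, ∑ j, B i j ≤ t) ∧ (∀ j, ∑ i, B i j ≤ 1) ∧
      (∑ i, ∑ j, B i j) = tTermRank t A ∧
      (∀ i, ∑ j, C i j ≤ t - 1) ∧ (∀ j, ∑ i, C i j ≤ 1) ∧
      (∑ i, ∑ j, C i j) = tTermRank (t - 1) A :=
  exists_nested_realizers_general m n t A
end

section
/- If A is an m×n (0,1)-matrix, then the sequence ρ_0(A), ρ_1(A), ρ_2(A), … (with ρ_0(A) = 0) is concave: ρ_k(A) − ρ_{k−1}(A) ≥ ρ_{k+1}(A) − ρ_k(A) for every integer k ≥ 1. -/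
/-!
The `t`-term rank satisfies a König-type min-max formula: `ρ_t(A)` is the minimum, over column
sets `S`, of `t · #N(S) + #Sᶜ`, where `N(S)` is the set of rows meeting the support of `A` in the
columns `S`. For `≤`, every selected 1 lies in a column outside `S` or in a row of `N(S)`;
for `≥`, Hall's theorem matches the columns into `t` copies of every row plus `d` dummy
vertices adjacent to every column, where `d` is the deficiency. A pointwise minimum of affine
functions of `t` is concave.
-/

open scoped BigOperators

open Finset Matrix

section

variable {α β : Type*} [Fintype α] [Fintype β]

namespace Matrix

def colSupport (A : Matrix α β ℕ) (j : β) : Finset α :=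
  {i | A i j ≠ 0}

def coverWeight [DecidableEq α] [DecidableEq β] (t : ℕ) (A : Matrix α β ℕ) (S : Finset β) : ℕ :=
  t * #(S.biUnion A.colSupport) + #Sᶜ

end Matrix

theorem sum_le_coverWeight [DecidableEq α] [DecidableEq β] {t : ℕ} {A B : Matrix α β ℕ}
    (hBA : ∀ i j, B i j ≤ A i j) (hrow : ∀ i, ∑ j, B i j ≤ t) (hcol : ∀ j, ∑ i, B i j ≤ 1)
    (S : Finset β) : ∑ i, ∑ j, B i j ≤ coverWeight t A S := by
  set N := S.biUnion A.colSupport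
  have hS : ∑ j ∈ S, ∑ i, B i j ≤ t * #N :=
    calc ∑ j ∈ S, ∑ i, B i j = ∑ j ∈ S, ∑ i ∈ N, B i j := by
          refine sum_congr rfl fun j hj => (sum_subset (subset_univ _) fun i _ hi => ?_).symm
          by_contra hB
          have hAij : A i j ≠ 0 := ((Nat.pos_of_ne_zero hB).trans_le (hBA i j)).ne'
          exact hi (mem_biUnion.2 ⟨j, hj, by simpa [colSupport] using hAij⟩)
      _ = ∑ i ∈ N, ∑ j ∈ S, B i j := sum_comm
      _ ≤ ∑ i ∈ N, ∑ j, B i j := sum_le_sum fun i _ => sum_le_sum_of_subset (subset_univ S)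
      _ ≤ #N * t := sum_le_card_nsmul _ _ _ fun i _ => hrow i
      _ = t * #N := mul_comm _ _
  have hSc : ∑ j ∈ Sᶜ, ∑ i, B i j ≤ #Sᶜ := by
    simpa using sum_le_card_nsmul Sᶜ _ 1 fun j _ => hcol j
  calc ∑ i, ∑ j, B i j = ∑ j, ∑ i, B i j := sum_comm
    _ = ∑ j ∈ S, ∑ i, B i j + ∑ j ∈ Sᶜ, ∑ i, B i j := (sum_add_sum_compl S _).symm
    _ ≤ coverWeight t A S := add_le_add hS hSc

theorem bddAbove_tTermRank_set (t : ℕ) (A : Matrix α β ℕ) :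
    BddAbove {k : ℕ | ∃ B : Matrix α β ℕ,
      (∀ i j, B i j ≤ A i j) ∧ (∀ i, ∑ j, B i j ≤ t) ∧ (∀ j, ∑ i, B i j ≤ 1) ∧
      k = ∑ i, ∑ j, B i j} := by
  classical
  refine ⟨coverWeight t A ∅, ?_⟩
  rintro _ ⟨B, hBA, hrow, hcol, rfl⟩
  exact sum_le_coverWeight hBA hrow hcol ∅

theorem sum_le_tTermRank {t : ℕ} {A B : Matrix α β ℕ}
    (hBA : ∀ i j, B i j ≤ A i j) (hrow : ∀ i, ∑ j, B i j ≤ t) (hcol : ∀ j, ∑ i, B i j ≤ 1) :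
    ∑ i, ∑ j, B i j ≤ tTermRank t A :=
  le_csSup (bddAbove_tTermRank_set t A) ⟨B, hBA, hrow, hcol, rfl⟩

theorem exists_sum_eq_tTermRank (t : ℕ) (A : Matrix α β ℕ) :
    ∃ B : Matrix α β ℕ, (∀ i j, B i j ≤ A i j) ∧ (∀ i, ∑ j, B i j ≤ t) ∧
      (∀ j, ∑ i, B i j ≤ 1) ∧ tTermRank t A = ∑ i, ∑ j, B i j := by
  refine Nat.sSup_mem ?_ (bddAbove_tTermRank_set t A)
  exact ⟨0, 0, fun _ _ => Nat.zero_le _, by simp, by simp, by simp⟩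

theorem tTermRank_le_coverWeight [DecidableEq α] [DecidableEq β] (t : ℕ) (A : Matrix α β ℕ)
    (S : Finset β) : tTermRank t A ≤ coverWeight t A S := by
  obtain ⟨B, hBA, hrow, hcol, hB⟩ := exists_sum_eq_tTermRank t A
  exact hB ▸ sum_le_coverWeight hBA hrow hcol S

theorem card_isSome_le_tTermRank [DecidableEq α] {t : ℕ} {A : Matrix α β ℕ} (g : β → Option α)
    (hgA : ∀ i j, g j = some i → A i j ≠ 0) (hg : ∀ i, #{j | g j = some i} ≤ t) :
    #{j | (g j).isSome} ≤ tTermRank t A := by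
  let B : Matrix α β ℕ := Matrix.of fun i j => if g j = some i then 1 else 0
  have hcol : ∀ j, ∑ i, B i j = if (g j).isSome then 1 else 0 := by
    intro j
    cases h : g j <;> simp [B, h]
  have hB := sum_le_tTermRank (t := t) (A := A) (B := B)
    (fun i j => by by_cases h : g j = some i <;> simp [B, h, Nat.one_le_iff_ne_zero, hgA i j])
    (fun i => by simpa [B] using hg i) (fun j => by rw [hcol]; split <;> simp)
  calc #{j | (g j).isSome} = ∑ j, ∑ i, B i j := by simp [hcol]
    _ = ∑ i, ∑ j, B i j := sum_comm
    _ ≤ tTermRank t A := hB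

theorem card_le_tTermRank_add_of_injective [DecidableEq α] {t d : ℕ} {A : Matrix α β ℕ}
    (f : β → (α × Fin t) ⊕ Fin d) (hf : Function.Injective f)
    (hfA : ∀ i c j, f j = .inl (i, c) → A i j ≠ 0) :
    Fintype.card β ≤ tTermRank t A + d := by
  let g : β → Option α := fun j => Sum.elim (fun p => some p.1) (fun _ => none) (f j)
  have hsome : ∀ i j, g j = some i ↔ ∃ c, f j = .inl (i, c) := by
    intro i j
    rcases h : f j with ⟨i', c⟩ | c <;> simp [g, h, eq_comm]
  have hnone : ∀ j, (g j).isSome = false ↔ ∃ c, f j = .inr c := by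
    intro j
    cases h : f j <;> simp [g, h]
  have hmatched := card_isSome_le_tTermRank g
    (fun i j hij => by
      obtain ⟨c, hc⟩ := (hsome i j).1 hij
      exact hfA i c j hc)
    (fun i => calc #{j | g j = some i} ≤ #(univ.image fun c : Fin t => Sum.inl (i, c)) :=
          card_le_card_of_injOn f (fun j hj => by
            obtain ⟨c, hc⟩ := (hsome i j).1 (mem_filter.1 hj).2
            simp [hc]) hf.injOn
        _ ≤ t := card_image_le.trans (by simp))
  have hunmatched : #{j | (g j).isSome = false} ≤ d :=
    calc #{j | (g j).isSome = false} ≤ #(univ.image fun c : Fin d => Sum.inr c) :=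
          card_le_card_of_injOn f (fun j hj => by
            obtain ⟨c, hc⟩ := (hnone j).1 (mem_filter.1 hj).2
            simp [hc]) hf.injOn
      _ ≤ d := card_image_le.trans (by simp)
  have := card_filter_add_card_filter_not (s := univ) fun j => (g j).isSome
  simp only [Bool.not_eq_true, card_univ] at this
  omega

theorem card_le_tTermRank_add [DecidableEq α] (t d : ℕ) (A : Matrix α β ℕ)
    (hdef : ∀ S : Finset β, #S ≤ t * #(S.biUnion A.colSupport) + d) :
    Fintype.card β ≤ tTermRank t A + d := by
  let T : β → Finset ((α × Fin t) ⊕ Fin d) := fun j => (A.colSupport j ×ˢ univ).disjSum univ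
  have hall : ∀ S : Finset β, #S ≤ #(S.biUnion T) := by
    intro S
    rcases S.eq_empty_or_nonempty with rfl | ⟨j₀, hj₀⟩
    · simp
    calc #S ≤ t * #(S.biUnion A.colSupport) + d := hdef S
      _ = #((S.biUnion A.colSupport ×ˢ (univ : Finset (Fin t))).disjSum
            (univ : Finset (Fin d))) := by
          simp [card_disjSum, card_product, mul_comm]
      _ ≤ #(S.biUnion T) := by
          refine card_le_card fun x hx => ?_
          rcases x with ⟨i, c⟩ | c
          · simp only [inl_mem_disjSum, mem_product, mem_biUnion] at hx
            obtain ⟨⟨j, hj, hij⟩, -⟩ := hx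
            exact mem_biUnion.2 ⟨j, hj, by simp [T, hij]⟩
          · exact mem_biUnion.2 ⟨j₀, hj₀, by simp [T]⟩
  obtain ⟨f, hf, hfT⟩ := (all_card_le_biUnion_card_iff_exists_injective T).1 hall
  exact card_le_tTermRank_add_of_injective f hf fun i c j hfj => by
    simpa [T, colSupport, hfj] using hfT j

theorem exists_coverWeight_eq_tTermRank [DecidableEq α] [DecidableEq β] (t : ℕ)
    (A : Matrix α β ℕ) : ∃ S, coverWeight t A S = tTermRank t A := by
  obtain ⟨S₀, -, hmin⟩ := exists_min_image univ (coverWeight t A) univ_nonempty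
  have hS₀ : coverWeight t A S₀ ≤ Fintype.card β :=
    (hmin ∅ (mem_univ _)).trans_eq (by simp [coverWeight])
  have hrank := card_le_tTermRank_add t (Fintype.card β - coverWeight t A S₀) A fun S => by
    have hS := hmin S (mem_univ S)
    simp only [coverWeight, card_compl] at hS hS₀ ⊢
    have := card_le_univ S
    omega
  exact ⟨S₀, le_antisymm (by omega) (tTermRank_le_coverWeight t A S₀)⟩

end

theorem t_term_rank_concave_general (m n : ℕ) (A : Matrix (Fin m) (Fin n) ℕ)
    (k : ℕ) (hk : 1 ≤ k) :
    tTermRank (k + 1) A + tTermRank (k - 1) A ≤ 2 * tTermRank k A := by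
  obtain ⟨j, rfl⟩ : ∃ j, k = j + 1 := ⟨k - 1, by omega⟩
  obtain ⟨S, hS⟩ := exists_coverWeight_eq_tTermRank (j + 1) A
  have hsucc := tTermRank_le_coverWeight (j + 1 + 1) A S
  have hpred := tTermRank_le_coverWeight j A S
  rw [Nat.add_sub_cancel, ← hS]
  simp only [coverWeight] at hsucc hpred ⊢
  linarith

/-- Concavity of the sequence `ρ_0(A), ρ_1(A), ρ_2(A), …`:
`ρ_k(A) − ρ_{k−1}(A) ≥ ρ_{k+1}(A) − ρ_k(A)` for all `k ≥ 1`
(note `ρ_0(A) = 0` holds by definition of `tTermRank`). -/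
theorem t_term_rank_concave (m n : ℕ) (A : Matrix (Fin m) (Fin n) ℕ)
    (hA : ∀ i j, A i j ≤ 1) (k : ℕ) (hk : 1 ≤ k) :
    tTermRank (k + 1) A + tTermRank (k - 1) A ≤ 2 * tTermRank k A :=
  t_term_rank_concave_general m n A k hk
end

section
/- Let R = (r_1,…,r_m) and S = (s_1,…,s_n) be nonnegative integral vectors, let t be a positive integer, let R' = (r'_1,…,r'_m) be an integral vector with r_i − t ≤ r'_i ≤ r_i for i = 1,…,m, and let S' = (s'_1,…,s'_n) be an integral vector with s_j − 1 ≤ s'_j ≤ s_j for j = 1,…,n. Then there exist matrices A ∈ A(R,S) and A' ∈ A(R',S') with A' ≤ A (entrywise) if and only if both classes A(R,S) and A(R',S') are nonempty. -/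
open scoped BigOperators

/-- `A ∈ 𝒜(R,S)` for integer vectors `R`, `S`: `A` is an `m×n` (0,1)-matrix whose row sum
vector is `R` and whose column sum vector is `S`. -/
def inClassZ {m n : ℕ} (R : Fin m → ℤ) (S : Fin n → ℤ)
    (A : Matrix (Fin m) (Fin n) ℕ) : Prop :=
  (∀ i j, A i j ≤ 1) ∧ (∀ i, (∑ j, (A i j : ℤ)) = R i) ∧ (∀ j, (∑ i, (A i j : ℤ)) = S j)

/-!
Given `A ∈ 𝒜(R,S)` and `A' ∈ 𝒜(R',S')`, call `(p,q)` a deficit if `A p q = 0`, `A' p q = 1`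
and a surplus if `A p q = 1`, `A' p q = 0`. As `R' ≤ R` and `S' ≤ S`, a row or column with a
deficit has a surplus; as `S - 1 ≤ S'`, a column with two surpluses has a deficit.
Take a deficit `(i,j)` whose column has the most surpluses, and a surplus `(i,k)`. If every
surplus `(l,j)` had `(l,k)` surplus too, column `k` would have strictly more surpluses than
column `j` (also in row `i`), hence at least two, hence a deficit, against the choice of `j`.
So some surplus `(l,j)` has `(l,k)` not a surplus, and an interchange on rows `i, l` and columns
`j, k` of `A` (if `A l k = 0`) or of `A'` (otherwise) removes the deficit `(i,j)` without
creating another one. Induction on the number of deficits finishes the proof.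
-/

open Finset

lemma sum_sub_sum_eq_card_sub_card {α : Type*} [Fintype α] {f g : α → ℕ}
    (hf : ∀ a, f a ≤ 1) (hg : ∀ a, g a ≤ 1) :
    (∑ a, (f a : ℤ)) - ∑ a, (g a : ℤ) = #{a | g a < f a} - #{a | f a < g a} := by
  have hpoint : ∀ a, (f a : ℤ) - g a =
      (if g a < f a then 1 else 0) - (if f a < g a then 1 else 0) := by
    intro a
    have := hf a; have := hg a
    split_ifs <;> omega
  rw [← sum_sub_distrib, sum_congr rfl fun a _ => hpoint a, sum_sub_distrib,
    sum_boole, sum_boole]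

lemma sum_eq_sum_of_eq_off_pair {α M : Type*} [Fintype α] [DecidableEq α] [AddCommMonoid M]
    {f g : α → M} {i l : α} (hil : i ≠ l) (hoff : ∀ p, p ≠ i → p ≠ l → f p = g p)
    (hpair : f i + f l = g i + g l) :
    ∑ p, f p = ∑ p, g p := by
  rw [← sum_sdiff (subset_univ {i, l}), ← sum_sdiff (subset_univ {i, l}) (f := g),
    sum_pair hil, sum_pair hil, hpair]
  congr 1
  refine sum_congr rfl fun p hp => ?_
  simp only [mem_sdiff, mem_univ, mem_insert, mem_singleton, true_and, not_or] at hp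
  exact hoff p hp.1 hp.2

namespace Matrix

variable {ι κ : Type*} [DecidableEq ι] [DecidableEq κ]

def interchange (A : Matrix ι κ ℕ) (i l : ι) (j k : κ) : Matrix ι κ ℕ :=
  fun p q => if p = i ∨ p = l then A p (Equiv.swap j k q) else A p q

variable {A : Matrix ι κ ℕ} {i l : ι} {j k : κ}

lemma interchange_apply_of_not_corner {p : ι} {q : κ}
    (h : ¬((p = i ∨ p = l) ∧ (q = j ∨ q = k))) : A.interchange i l j k p q = A p q := by
  unfold interchange
  split_ifs with hp
  · rw [Equiv.swap_apply_of_ne_of_ne] <;> tauto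
  · rfl

lemma sum_interchange_row [Fintype κ] (p : ι) :
    ∑ q, (A.interchange i l j k p q : ℤ) = ∑ q, (A p q : ℤ) := by
  unfold interchange
  split_ifs
  · exact Equiv.sum_comp (Equiv.swap j k) (fun q => (A p q : ℤ))
  · rfl

lemma sum_interchange_col [Fintype ι] (hil : i ≠ l)
    (hsum : (A i j : ℤ) + A l j = A i k + A l k) (q : κ) :
    ∑ p, (A.interchange i l j k p q : ℤ) = ∑ p, (A p q : ℤ) := by
  refine sum_eq_sum_of_eq_off_pair hil (fun p hpi hpl => ?_) ?_
  · simp [interchange, hpi, hpl]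
  · simp only [interchange, true_or, or_true, if_true]
    rcases eq_or_ne q j with rfl | hqj
    · rw [Equiv.swap_apply_left, hsum]
    rcases eq_or_ne q k with rfl | hqk
    · rw [Equiv.swap_apply_right, hsum]
    · rw [Equiv.swap_apply_of_ne_of_ne hqj hqk]

end Matrix

section Anstee

variable {m n : ℕ} {R R' : Fin m → ℤ} {S S' : Fin n → ℤ} {A A' : Matrix (Fin m) (Fin n) ℕ}

lemma inClassZ.interchange (hA : inClassZ R S A) {i l : Fin m} {j k : Fin n}
    (hil : i ≠ l) (hsum : (A i j : ℤ) + A l j = A i k + A l k) :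
    inClassZ R S (A.interchange i l j k) := by
  refine ⟨fun p q => ?_, fun p => ?_, fun q => ?_⟩
  · unfold Matrix.interchange; split_ifs <;> exact hA.1 _ _
  · rw [Matrix.sum_interchange_row, hA.2.1]
  · rw [Matrix.sum_interchange_col hil hsum, hA.2.2]

def deficit (A A' : Matrix (Fin m) (Fin n) ℕ) : Finset (Fin m × Fin n) :=
  {p | A p.1 p.2 < A' p.1 p.2}

lemma card_deficit_lt {B B' : Matrix (Fin m) (Fin n) ℕ} {i l : Fin m} {j k : Fin n}
    (hij : A i j < A' i j)
    (hB : ∀ p q, ¬((p = i ∨ p = l) ∧ (q = j ∨ q = k)) → B p q = A p q ∧ B' p q = A' p q)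
    (hcorner : ∀ p q, (p = i ∨ p = l) → (q = j ∨ q = k) → B' p q ≤ B p q) :
    #(deficit B B') < #(deficit A A') := by
  have hsub : deficit B B' ⊆ (deficit A A').erase (i, j) := by
    rintro ⟨p, q⟩ hpq
    simp only [deficit, mem_filter, mem_univ, true_and, mem_erase, ne_eq] at hpq ⊢
    by_cases hc : (p = i ∨ p = l) ∧ (q = j ∨ q = k)
    · exact absurd (hcorner p q hc.1 hc.2) (not_le.mpr hpq)
    · obtain ⟨hBA, hBA'⟩ := hB p q hc
      refine ⟨fun h => hc ?_, hBA ▸ hBA' ▸ hpq⟩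
      simp only [Prod.mk.injEq] at h
      exact ⟨Or.inl h.1, Or.inl h.2⟩
  refine (card_le_card hsub).trans_lt (card_erase_lt_of_mem ?_)
  simpa [deficit] using hij

lemma exists_card_deficit_lt_of_corners (hA : inClassZ R S A) (hA' : inClassZ R' S' A')
    {i l : Fin m} {j k : Fin n} (hil : i ≠ l)
    (hij : A i j < A' i j) (hik : A' i k < A i k) (hlj : A' l j < A l j)
    (hlk : A l k ≤ A' l k) :
    ∃ B B', inClassZ R S B ∧ inClassZ R' S' B' ∧ #(deficit B B') < #(deficit A A') := by
  have := hA.1 i k; have := hA.1 l j; have := hA'.1 i j; have := hA'.1 l k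
  obtain ⟨hAij, hA'ij⟩ : A i j = 0 ∧ A' i j = 1 := by omega
  obtain ⟨hAik, hA'ik⟩ : A i k = 1 ∧ A' i k = 0 := by omega
  obtain ⟨hAlj, hA'lj⟩ : A l j = 1 ∧ A' l j = 0 := by omega
  have hjk : j ≠ k := by rintro rfl; omega
  rcases Nat.eq_zero_or_pos (A l k) with hlk0 | hlk1
  · refine ⟨A.interchange i l j k, A', hA.interchange hil (by omega), hA',
      card_deficit_lt hij (fun p q hc => ⟨Matrix.interchange_apply_of_not_corner hc, rfl⟩) ?_⟩
    rintro p q (rfl | rfl) (rfl | rfl) <;>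
      simp [Matrix.interchange, hil.symm, *]
  · refine ⟨A, A'.interchange i l j k, hA, hA'.interchange hil (by omega),
      card_deficit_lt hij (fun p q hc => ⟨rfl, Matrix.interchange_apply_of_not_corner hc⟩) ?_⟩
    rintro p q (rfl | rfl) (rfl | rfl) <;>
      simp [Matrix.interchange, hil.symm, *]

lemma exists_card_deficit_lt (hRle : ∀ i, R' i ≤ R i) (hSle : ∀ j, S' j ≤ S j)
    (hS1 : ∀ j, S j - 1 ≤ S' j) (hA : inClassZ R S A) (hA' : inClassZ R' S' A')
    (hdef : (deficit A A').Nonempty) :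
    ∃ B B', inClassZ R S B ∧ inClassZ R' S' B' ∧ #(deficit B B') < #(deficit A A') := by
  let surplusIn (q : Fin n) : Finset (Fin m) := {p | A' p q < A p q}
  let deficitIn (q : Fin n) : Finset (Fin m) := {p | A p q < A' p q}
  have hcol (q : Fin n) : (#(surplusIn q) : ℤ) - #(deficitIn q) = S q - S' q := by
    rw [← hA.2.2 q, ← hA'.2.2 q]
    exact (sum_sub_sum_eq_card_sub_card (fun p => hA.1 p q) (fun p => hA'.1 p q)).symm
  obtain ⟨⟨i, j⟩, hij, hmax⟩ := exists_max_image _ (fun x => #(surplusIn x.2)) hdef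
  simp only [deficit, mem_filter, mem_univ, true_and, Prod.forall] at hij hmax
  obtain ⟨k, hik⟩ : ∃ k, A' i k < A i k := by
    have hrow := sum_sub_sum_eq_card_sub_card (fun q => hA.1 i q) (fun q => hA'.1 i q)
    rw [hA.2.1 i, hA'.2.1 i] at hrow
    have : 0 < #{q | A i q < A' i q} := card_pos.mpr ⟨j, by simpa using hij⟩
    obtain ⟨k, hk⟩ := card_pos.mp (by have := hRle i; omega : 0 < #{q | A' i q < A i q})
    exact ⟨k, by simpa using hk⟩
  obtain ⟨l, hlj, hlk⟩ : ∃ l, A' l j < A l j ∧ A l k ≤ A' l k := by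
    by_contra! hbad
    have hsub : insert i (surplusIn j) ⊆ surplusIn k := by
      intro p hp
      rcases mem_insert.mp hp with rfl | hp
      · simpa [surplusIn] using hik
      · simpa [surplusIn] using hbad p (by simpa [surplusIn] using hp)
    have hi : i ∉ surplusIn j := by
      simp only [surplusIn, mem_filter, mem_univ, true_and, not_lt]; omega
    have hgrow := card_le_card hsub
    rw [card_insert_of_notMem hi] at hgrow
    have hdj : 0 < #(deficitIn j) := card_pos.mpr ⟨i, by simpa [deficitIn] using hij⟩
    have := hcol j; have := hcol k; have := hSle j; have := hS1 k
    obtain ⟨p, hp⟩ := card_pos.mp (by omega : 0 < #(deficitIn k))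
    have := hmax p k (by simpa [deficitIn] using hp)
    omega
  have hil : i ≠ l := by rintro rfl; omega
  exact exists_card_deficit_lt_of_corners hA hA' hil hij hik hlj hlk

lemma exists_nested_of_inClassZ (hRle : ∀ i, R' i ≤ R i) (hSle : ∀ j, S' j ≤ S j)
    (hS1 : ∀ j, S j - 1 ≤ S' j) (hA : inClassZ R S A) (hA' : inClassZ R' S' A') :
    ∃ B B', inClassZ R S B ∧ inClassZ R' S' B' ∧ ∀ i j, B' i j ≤ B i j := by
  induction hN : #(deficit A A') using Nat.strong_induction_on generalizing A A' with
  | _ N ih =>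
    rcases (deficit A A').eq_empty_or_nonempty with hempty | hdef
    · refine ⟨A, A', hA, hA', fun i j => not_lt.mp fun hlt => ?_⟩
      simpa [hempty] using (show (i, j) ∈ deficit A A' by simpa [deficit] using hlt)
    · obtain ⟨B, B', hB, hB', hlt⟩ := exists_card_deficit_lt hRle hSle hS1 hA hA' hdef
      exact ih _ (hN ▸ hlt) hB hB' rfl

end Anstee

theorem exists_nested_in_classes_iff_general (m n t : ℕ)
    (R : Fin m → ℤ) (S : Fin n → ℤ)
    (R' : Fin m → ℤ) (hR' : ∀ i, R i - t ≤ R' i ∧ R' i ≤ R i)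
    (S' : Fin n → ℤ) (hS' : ∀ j, S j - 1 ≤ S' j ∧ S' j ≤ S j) :
    (∃ (A A' : Matrix (Fin m) (Fin n) ℕ),
        inClassZ R S A ∧ inClassZ R' S' A' ∧ ∀ i j, A' i j ≤ A i j) ↔
      ((∃ A, inClassZ R S A) ∧ (∃ A', inClassZ R' S' A')) := by
  constructor
  · rintro ⟨A, A', hA, hA', -⟩
    exact ⟨⟨A, hA⟩, ⟨A', hA'⟩⟩
  · rintro ⟨⟨A, hA⟩, ⟨A', hA'⟩⟩
    exact exists_nested_of_inClassZ (fun i => (hR' i).2) (fun j => (hS' j).2)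
      (fun j => (hS' j).1) hA hA'

/-- Anstee's theorem (corollary form): given nonnegative integral vectors `R`, `S`, a
positive integer `t`, and integral vectors `R'`, `S'` with `r_i − t ≤ r'_i ≤ r_i` and
`s_j − 1 ≤ s'_j ≤ s_j`, there exist `A ∈ 𝒜(R,S)` and `A' ∈ 𝒜(R',S')` with `A' ≤ A`
(entrywise) iff both classes are nonempty. -/
theorem exists_nested_in_classes_iff (m n t : ℕ) (ht : 0 < t)
    (R : Fin m → ℤ) (S : Fin n → ℤ) (hR : ∀ i, 0 ≤ R i) (hS : ∀ j, 0 ≤ S j)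
    (R' : Fin m → ℤ) (hR' : ∀ i, R i - t ≤ R' i ∧ R' i ≤ R i)
    (S' : Fin n → ℤ) (hS' : ∀ j, S j - 1 ≤ S' j ∧ S' j ≤ S j) :
    (∃ (A A' : Matrix (Fin m) (Fin n) ℕ),
        inClassZ R S A ∧ inClassZ R' S' A' ∧ ∀ i j, A' i j ≤ A i j) ↔
      ((∃ A, inClassZ R S A) ∧ (∃ A', inClassZ R' S' A')) :=
  exists_nested_in_classes_iff_general m n t R S R' hR' S' hS'
end
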